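/- Under misère play, with mex{xᵢ} = 1, the game {*x₁,…,*xₘ}:1 + {*x₁,…,*xₘ}:(−1) is a first-player win: the first player (say Left) wins by moving the component {*x₁,…,*xₘ}:(−1) to 0, using that 1 ∉ {x₁,…,xₘ}, so the opponent cannot move the remaining component to *. -/

import Mathlib

/-! Combinatorial game theory (`SetTheory.PGame`, `nim`, `star`, `Nimber`) is no longer in
Mathlib; the notions used below are restored here with their former meaning. -/

section

universe u

namespace SetTheory

/-- Pre-games (as in the former Mathlib `SetTheory.PGame`). -/
inductive PGame : Type (u + 1)
  | mk : ∀ α β : Type u, (α → PGame) → (β → PGame) → PGame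

namespace PGame

/-- The indexing type for allowable moves by Left. -/
def LeftMoves : PGame → Type u
  | mk l _ _ _ => l

/-- The indexing type for allowable moves by Right. -/
def RightMoves : PGame → Type u
  | mk _ r _ _ => r

/-- The new game after Left makes an allowed move. -/
def moveLeft : ∀ g : PGame, LeftMoves g → PGame
  | mk _l _ L _ => L

/-- The new game after Right makes an allowed move. -/
def moveRight : ∀ g : PGame, RightMoves g → PGame
  | mk _ _r _ R => R

/-- `IsOption x y` means that `x` is either a left or right option for `y`. -/
inductive IsOption : PGame → PGame → Prop
  | moveLeft {x : PGame} (i : x.LeftMoves) : IsOption (x.moveLeft i) x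
  | moveRight {x : PGame} (i : x.RightMoves) : IsOption (x.moveRight i) x

theorem wf_isOption : WellFounded IsOption := ⟨fun x => by
  induction x with
  | mk l r L R IHl IHr =>
    constructor
    intro y h
    cases h with
    | moveLeft i => exact IHl i
    | moveRight j => exact IHr j⟩

/-- `Subsequent x y` says that `x` can be obtained by playing some nonempty sequence of moves
from `y`. -/
def Subsequent : PGame → PGame → Prop :=
  Relation.TransGen IsOption

theorem wf_subsequent : WellFounded Subsequent :=
  wf_isOption.transGen

instance : WellFoundedRelation PGame :=
  ⟨_, wf_subsequent⟩

theorem Subsequent.moveLeft' (x : PGame) (i : x.LeftMoves) : Subsequent (x.moveLeft i) x :=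
  Relation.TransGen.single (IsOption.moveLeft i)

theorem Subsequent.moveRight' (x : PGame) (j : x.RightMoves) : Subsequent (x.moveRight j) x :=
  Relation.TransGen.single (IsOption.moveRight j)

theorem Subsequent.mk_left' {xl xr : Type u} (xL : xl → PGame) (xR : xr → PGame) (i : xl) :
    Subsequent (xL i) (mk xl xr xL xR) :=
  Subsequent.moveLeft' (mk xl xr xL xR) i

theorem Subsequent.mk_right' {xl xr : Type u} (xL : xl → PGame) (xR : xr → PGame) (j : xr) :
    Subsequent (xR j) (mk xl xr xL xR) :=
  Subsequent.moveRight' (mk xl xr xL xR) j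

/-- The pre-game `0 = {|}`. -/
instance : Zero PGame :=
  ⟨⟨PEmpty, PEmpty, PEmpty.elim, PEmpty.elim⟩⟩

/-- The pre-game `1 = {0|}`. -/
instance : One PGame :=
  ⟨⟨PUnit, PEmpty, fun _ => 0, PEmpty.elim⟩⟩

/-- `leLF x y` is the pair of propositions `(x ≤ y, x ⧏ y)`. -/
def leLF : PGame.{u} → PGame.{u} → Prop × Prop
  | mk xl xr xL xR, mk yl yr yL yR =>
    ((∀ i, (leLF (xL i) (mk yl yr yL yR)).2) ∧ ∀ j, (leLF (mk xl xr xL xR) (yR j)).2,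
      (∃ i, (leLF (mk xl xr xL xR) (yL i)).1) ∨ ∃ j, (leLF (xR j) (mk yl yr yL yR)).1)
termination_by x y => (x, y)
decreasing_by
  all_goals first
    | exact Prod.Lex.left _ _ (Subsequent.mk_left' _ _ _)
    | exact Prod.Lex.left _ _ (Subsequent.mk_right' _ _ _)
    | exact Prod.Lex.right _ (Subsequent.mk_left' _ _ _)
    | exact Prod.Lex.right _ (Subsequent.mk_right' _ _ _)

/-- The less or equal relation on pre-games. -/
instance : LE PGame :=
  ⟨fun x y => (leLF x y).1⟩

/-- The less than relation on pre-games (former Mathlib: `x ≤ y ∧ x ⧏ y`, where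
`x ⧏ y ↔ ¬ y ≤ x`). -/
instance : LT PGame :=
  ⟨fun x y => x ≤ y ∧ ¬ y ≤ x⟩

/-- The negation of a pre-game. -/
def neg : PGame → PGame
  | mk l r L R => mk r l (fun i => neg (R i)) fun i => neg (L i)

instance : Neg PGame :=
  ⟨neg⟩

/-- The sum of two pre-games. -/
def add : PGame.{u} → PGame.{u} → PGame.{u}
  | mk xl xr xL xR, mk yl yr yL yR =>
    mk (xl ⊕ yl) (xr ⊕ yr)
      (Sum.elim (fun i => add (xL i) (mk yl yr yL yR)) fun i => add (mk xl xr xL xR) (yL i))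
      (Sum.elim (fun i => add (xR i) (mk yl yr yL yR)) fun i => add (mk xl xr xL xR) (yR i))
termination_by x y => (x, y)
decreasing_by
  all_goals first
    | exact Prod.Lex.left _ _ (Subsequent.mk_left' _ _ _)
    | exact Prod.Lex.left _ _ (Subsequent.mk_right' _ _ _)
    | exact Prod.Lex.right _ (Subsequent.mk_left' _ _ _)
    | exact Prod.Lex.right _ (Subsequent.mk_right' _ _ _)

instance : Add PGame.{u} :=
  ⟨add⟩

instance : Sub PGame :=
  ⟨fun x y => x + -y⟩

/-- The pre-game `star = {0|0}`. -/
def star : PGame.{u} :=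
  ⟨PUnit, PUnit, fun _ => 0, fun _ => 0⟩

/-- The definition of single-heap nim: options are `nim o'` for every `o' < o`. -/
noncomputable def nim (o : Ordinal.{u}) : PGame.{u} :=
  ⟨o.ToType, o.ToType,
    fun x => nim (Ordinal.typein (α := o.ToType) (· < ·) x),
    fun x => nim (Ordinal.typein (α := o.ToType) (· < ·) x)⟩
termination_by o
decreasing_by all_goals exact Ordinal.typein_lt_self x

end PGame

end SetTheory

/-- Nimbers (former Mathlib): a type synonym for ordinals, with the same order and `1`. -/
def Nimber : Type (u + 1) :=
  Ordinal.{u}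

noncomputable instance : ConditionallyCompleteLinearOrderBot Nimber.{u} :=
  inferInstanceAs (ConditionallyCompleteLinearOrderBot Ordinal.{u})

instance : One Nimber.{u} :=
  ⟨(1 : Ordinal.{u})⟩

end

open SetTheory PGame

universe u

/-- The four outcome classes of a combinatorial game. -/
inductive Outcome : Type
  | L | N | P | R
deriving DecidableEq

/-- The partial order on outcomes: `R` least, `L` greatest, `N` and `P` incomparable. -/
def Outcome.leB : Outcome → Outcome → Bool
  | .R, _ => true
  | _, .L => true
  | .N, .N => true
  | .P, .P => true
  | _, _ => false

instance : PartialOrder Outcome where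
  le a b := Outcome.leB a b = true
  le_refl a := by cases a <;> rfl
  le_trans a b c := by cases a <;> cases b <;> cases c <;> simp [Outcome.leB]
  le_antisymm a b := by cases a <;> cases b <;> simp [Outcome.leB]

/-- `misereWins true G` : Left, moving first, wins `G` under misère play;
`misereWins false G` : Right, moving first, wins `G` under misère play.
(Under misère play, a player who cannot move wins.) -/
def misereWins : Bool → SetTheory.PGame.{u} → Prop
  | true, G => IsEmpty G.LeftMoves ∨ ∃ i, ¬ misereWins false (G.moveLeft i)
  | false, G => IsEmpty G.RightMoves ∨ ∃ j, ¬ misereWins true (G.moveRight j)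
termination_by _ G => G
decreasing_by
  all_goals first
    | exact Subsequent.moveLeft' _ _
    | exact Subsequent.moveRight' _ _

/-- Build an outcome class from the propositions "Left moving first wins" and
"Right moving first wins". -/
noncomputable def outcomeOf (LF RF : Prop) : Outcome := by
  classical exact if LF then (if RF then .N else .L) else (if RF then .R else .P)

/-- The normal-play outcome `o⁺(G)` of a game. -/
noncomputable def normalOutcome (G : PGame) : Outcome :=
  outcomeOf (¬ G ≤ 0) (¬ 0 ≤ G)

/-- The misère-play outcome `o⁻(G)` of a game. -/
noncomputable def misereOutcome (G : PGame) : Outcome :=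
  outcomeOf (misereWins true G) (misereWins false G)

/-- The ordinal sum `G : H` of two games: either move in `G` (destroying the `H` part),
or move in `H` keeping the base `G`. -/
def ordinalSum (G : PGame.{u}) : PGame.{u} → PGame.{u}
  | H => PGame.mk (G.LeftMoves ⊕ H.LeftMoves) (G.RightMoves ⊕ H.RightMoves)
      (Sum.elim G.moveLeft fun i => ordinalSum G (H.moveLeft i))
      (Sum.elim G.moveRight fun j => ordinalSum G (H.moveRight j))
termination_by H => H
decreasing_by
  all_goals first
    | exact Subsequent.moveLeft' _ _
    | exact Subsequent.moveRight' _ _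

/-- The game `↑` (up) `= {0 | *}`. -/
def up : PGame.{u} := ⟨PUnit, PUnit, fun _ => 0, fun _ => star⟩

/-- `n` copies of `↑` added together. -/
def nUp : ℕ → PGame.{u}
  | 0 => 0
  | n + 1 => nUp n + up

/-- The integer multiple `w·↑`. -/
def upMul : ℤ → PGame.{u}
  | .ofNat k => nUp k
  | .negSucc k => -(nUp (k + 1))

/-- Finite disjunctive sum of a family of games. -/
def psum : {k : ℕ} → (Fin k → PGame.{u}) → PGame.{u}
  | 0, _ => 0
  | k + 1, f => psum (fun i : Fin k => f i.castSucc) + f (Fin.last k)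

/-- The superstar `{*x₁, …, *xₙ}`: the impartial game whose Left and Right options are
exactly the nimbers `*xᵢ`. -/
noncomputable def superstar {n : ℕ} (x : Fin n → ℕ) : PGame :=
  ⟨Fin n, Fin n, fun i => nim (x i), fun i => nim (x i)⟩

/-- The minimum excludant of a set of naturals. -/
noncomputable def setMex (S : Set ℕ) : ℕ := sInf {n | n ∉ S}

/-- Iterated XOR (nim-sum) of a finite family of naturals. -/
def xorSum : {k : ℕ} → (Fin k → ℕ) → ℕ
  | 0, _ => 0
  | k + 1, f => xorSum (fun i : Fin k => f i.castSucc) ^^^ f (Fin.last k)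

/-- A set of naturals is star-closed if it is closed under XOR with 1. -/
def StarClosedN (S : Set ℕ) : Prop := ∀ a ∈ S, a ^^^ 1 ∈ S

/-- `G` is all-small (dicotic): in every subposition, either both players can move
or neither can. -/
def AllSmall (G : PGame) : Prop :=
  (Nonempty G.LeftMoves ↔ Nonempty G.RightMoves) ∧
    ∀ p, Subsequent p G → (Nonempty p.LeftMoves ↔ Nonempty p.RightMoves)

/-- `G` has (integer) atomic weight `w`, via the remote-star characterization:
for all sufficiently remote `N`, `*N + ↓ < G - w·↑ < *N + ↑`. -/
def HasIntAtomicWeight (G : PGame) (w : ℤ) : Prop :=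
  ∃ N₀ : ℕ, ∀ N : ℕ, N₀ ≤ N →
    nim N + (-up) < G - upMul w ∧ G - upMul w < nim N + up

open Classical in
/-- The misère Grundy value of an (impartial) game: the mex of the misère Grundy values
of its options, except that the empty game has misère Grundy value `1`. -/
noncomputable def misereGrundy : PGame.{u} → Nimber.{u}
  | G =>
    if IsEmpty G.LeftMoves then 1
    else sInf (Set.range fun i => misereGrundy (G.moveLeft i))ᶜ
termination_by G => G
decreasing_by
  all_goals first
    | exact Subsequent.moveLeft' _ _
    | exact Subsequent.moveRight' _ _

/-- A set of games closed under disjunctive sum and under taking subpositions. -/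
def SClosed (A : Set PGame) : Prop :=
  (∀ G ∈ A, ∀ H ∈ A, G + H ∈ A) ∧ ∀ G ∈ A, ∀ G', Subsequent G' G → G' ∈ A

/-- `K` is an evil kernel of `A`: setting `G* = G` for `G ∈ K` and `G* = G + *` otherwise,
one has `o⁺(G) = o⁻(G*)` and `o⁻(G) = o⁺(G*)` for all `G ∈ A`. -/
def IsEvilKernel (A K : Set PGame) : Prop :=
  K ⊆ A ∧ ∀ G ∈ A,
    (G ∈ K → normalOutcome G = misereOutcome G ∧ misereOutcome G = normalOutcome G) ∧
    (G ∉ K → normalOutcome G = misereOutcome (G + star) ∧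
      misereOutcome G = normalOutcome (G + star))

/-- `(A, K)` is evilly normal: `A` is closed, `K` is an evil kernel of `A`, and
`G + H ∉ K ↔ (G ∉ K ∧ H ∉ K)` for all `G, H ∈ A`. -/
def EvillyNormal (A K : Set PGame) : Prop :=
  SClosed A ∧ IsEvilKernel A K ∧ ∀ G ∈ A, ∀ H ∈ A, (G + H ∉ K ↔ G ∉ K ∧ H ∉ K)

/-- Normal-play equality of games: `G` and `H` have the same normal-play outcome in
every sum. -/
def NormalEq (G H : PGame) : Prop := ∀ X, normalOutcome (G + X) = normalOutcome (H + X)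


section Aux

private lemma add_mk_eq {xl xr yl yr : Type u} (xL : xl → PGame.{u}) (xR : xr → PGame.{u})
    (yL : yl → PGame.{u}) (yR : yr → PGame.{u}) :
    PGame.mk xl xr xL xR + PGame.mk yl yr yL yR =
      PGame.mk (xl ⊕ yl) (xr ⊕ yr)
        (Sum.elim (fun i => xL i + PGame.mk yl yr yL yR) fun i => PGame.mk xl xr xL xR + yL i)
        (Sum.elim (fun i => xR i + PGame.mk yl yr yL yR) fun i => PGame.mk xl xr xL xR + yR i) := by
  show PGame.add _ _ = _
  rw [PGame.add]
  rfl

private lemma misereWins_add_empty (Z : PGame.{u}) (hl : IsEmpty Z.LeftMoves)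
    (hr : IsEmpty Z.RightMoves) : ∀ (G : PGame.{u}) (b : Bool),
    (misereWins b (G + Z) ↔ misereWins b G) ∧ (misereWins b (Z + G) ↔ misereWins b G) := by
  cases Z with
  | mk zl zr ZL ZR =>
  have hl' : IsEmpty zl := hl
  have hr' : IsEmpty zr := hr
  intro G
  induction G with
  | mk l r L R ihL ihR =>
  intro b
  rw [add_mk_eq, add_mk_eq]
  cases b with
  | false =>
    rw [misereWins.eq_2, misereWins.eq_2, misereWins.eq_2]
    refine ⟨or_congr ⟨fun h => ⟨fun j => h.false (Sum.inl j)⟩,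
      fun h => ⟨fun s => Sum.elim (fun a => h.false a) (fun a => hr'.false a) s⟩⟩
      ⟨?_, ?_⟩, or_congr ⟨fun h => ⟨fun j => h.false (Sum.inr j)⟩,
      fun h => ⟨fun s => Sum.elim (fun a => hr'.false a) (fun a => h.false a) s⟩⟩
      ⟨?_, ?_⟩⟩
    · rintro ⟨j | j, h⟩
      · exact ⟨j, fun h' => h (((ihR j true).1).mpr h')⟩
      · exact isEmptyElim j
    · rintro ⟨j, h⟩
      exact ⟨Sum.inl j, fun h' => h (((ihR j true).1).mp h')⟩
    · rintro ⟨j | j, h⟩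
      · exact isEmptyElim j
      · exact ⟨j, fun h' => h (((ihR j true).2).mpr h')⟩
    · rintro ⟨j, h⟩
      exact ⟨Sum.inr j, fun h' => h (((ihR j true).2).mp h')⟩
  | true =>
    rw [misereWins.eq_1, misereWins.eq_1, misereWins.eq_1]
    refine ⟨or_congr ⟨fun h => ⟨fun j => h.false (Sum.inl j)⟩,
      fun h => ⟨fun s => Sum.elim (fun a => h.false a) (fun a => hl'.false a) s⟩⟩
      ⟨?_, ?_⟩, or_congr ⟨fun h => ⟨fun j => h.false (Sum.inr j)⟩,
      fun h => ⟨fun s => Sum.elim (fun a => hl'.false a) (fun a => h.false a) s⟩⟩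
      ⟨?_, ?_⟩⟩
    · rintro ⟨j | j, h⟩
      · exact ⟨j, fun h' => h (((ihL j false).1).mpr h')⟩
      · exact isEmptyElim j
    · rintro ⟨j, h⟩
      exact ⟨Sum.inl j, fun h' => h (((ihL j false).1).mp h')⟩
    · rintro ⟨j | j, h⟩
      · exact isEmptyElim j
      · exact ⟨j, fun h' => h (((ihL j false).2).mpr h')⟩
    · rintro ⟨j, h⟩
      exact ⟨Sum.inr j, fun h' => h (((ihL j false).2).mp h')⟩

private lemma nim_eq (o : Ordinal.{u}) :
    nim o = PGame.mk o.ToType o.ToType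
      (fun x => nim (Ordinal.typein (α := o.ToType) (· < ·) x))
      (fun x => nim (Ordinal.typein (α := o.ToType) (· < ·) x)) := by
  rw [nim]

private instance nim_zero_left : IsEmpty (nim (0 : Ordinal.{u})).LeftMoves := by
  rw [nim_eq]; exact Ordinal.isEmpty_toType_zero

private instance nim_zero_right : IsEmpty (nim (0 : Ordinal.{u})).RightMoves := by
  rw [nim_eq]; exact Ordinal.isEmpty_toType_zero

private lemma misereWins_of_isEmpty (G : PGame.{u}) [IsEmpty G.LeftMoves]
    [IsEmpty G.RightMoves] (b : Bool) : misereWins b G := by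
  cases b
  · rw [misereWins]; exact Or.inl inferInstance
  · rw [misereWins]; exact Or.inl inferInstance

private lemma not_misereWins_nim_one (b : Bool) : ¬ misereWins b (nim (1 : Ordinal.{u})) := by
  rw [nim_eq]
  cases b
  · rw [misereWins]
    push_neg
    refine ⟨(by show Nonempty (Ordinal.ToType 1); infer_instance), ?_⟩
    show ∀ j : (1 : Ordinal).ToType,
      misereWins true (nim (Ordinal.typein (α := (1 : Ordinal).ToType) (· < ·) j))
    intro j
    rw [Ordinal.typein_one_toType]
    exact misereWins_of_isEmpty _ true
  · rw [misereWins]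
    push_neg
    refine ⟨(by show Nonempty (Ordinal.ToType 1); infer_instance), ?_⟩
    show ∀ i : (1 : Ordinal).ToType,
      misereWins false (nim (Ordinal.typein (α := (1 : Ordinal).ToType) (· < ·) i))
    intro i
    rw [Ordinal.typein_one_toType]
    exact misereWins_of_isEmpty _ false

private lemma misereWins_nim (a : ℕ) (ha : a ≠ 1) (b : Bool) :
    misereWins b (nim (a : Ordinal.{u})) := by
  rcases Nat.eq_zero_or_pos a with h0 | hpos
  · subst h0
    rw [Nat.cast_zero]
    exact misereWins_of_isEmpty _ b
  · have h1a : (1 : Ordinal.{u}) < (a : Ordinal.{u}) := by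
      rw [← Nat.cast_one, Nat.cast_lt]
      omega
    have h1t : (1 : Ordinal.{u}) < Ordinal.type (α := (a : Ordinal.{u}).ToType) (· < ·) := by
      rw [Ordinal.type_toType]; exact h1a
    rw [nim_eq]
    cases b
    · rw [misereWins]
      refine Or.inr ⟨Ordinal.enum (α := (a : Ordinal.{u}).ToType) (· < ·) ⟨1, h1t⟩, ?_⟩
      show ¬ misereWins true (nim (Ordinal.typein (α := (a : Ordinal.{u}).ToType) (· < ·)
        (Ordinal.enum (α := (a : Ordinal.{u}).ToType) (· < ·) ⟨1, h1t⟩)))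
      rw [Ordinal.typein_enum]
      exact not_misereWins_nim_one true
    · rw [misereWins]
      refine Or.inr ⟨Ordinal.enum (α := (a : Ordinal.{u}).ToType) (· < ·) ⟨1, h1t⟩, ?_⟩
      show ¬ misereWins false (nim (Ordinal.typein (α := (a : Ordinal.{u}).ToType) (· < ·)
        (Ordinal.enum (α := (a : Ordinal.{u}).ToType) (· < ·) ⟨1, h1t⟩)))
      rw [Ordinal.typein_enum]
      exact not_misereWins_nim_one false

private lemma ordinalSum_eq (G H : PGame.{u}) :
    ordinalSum G H = PGame.mk (G.LeftMoves ⊕ H.LeftMoves) (G.RightMoves ⊕ H.RightMoves)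
      (Sum.elim G.moveLeft fun i => ordinalSum G (H.moveLeft i))
      (Sum.elim G.moveRight fun j => ordinalSum G (H.moveRight j)) := by
  rw [ordinalSum]

end Aux

/-- if `mex{xᵢ} = 1`, then under misère play
`{*x₁,…,*xₘ}:1 + {*x₁,…,*xₘ}:(-1)` is a first-player win. -/
theorem mutantFlower_pair_misere_N (m : ℕ) (x : Fin m → ℕ)
    (hx : setMex (Set.range x) = 1) :
    misereOutcome (ordinalSum (superstar x) 1 + ordinalSum (superstar x) (-1)) =
      Outcome.N := by
  classical
  -- extract combinatorial facts from the mex hypothesis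
  have hne : {n : ℕ | n ∉ Set.range x}.Nonempty := by
    by_contra h
    rw [Set.not_nonempty_iff_eq_empty] at h
    rw [setMex, h, Nat.sInf_empty] at hx
    exact one_ne_zero hx.symm
  have h1 : (1 : ℕ) ∉ Set.range x := by
    have := Nat.sInf_mem hne
    rwa [show sInf {n : ℕ | n ∉ Set.range x} = 1 from hx] at this
  have hx1 : ∀ i, x i ≠ 1 := fun i hi => h1 ⟨i, hi⟩
  have h0 : (0 : ℕ) ∈ Set.range x := by
    by_contra h
    have : setMex (Set.range x) ≤ 0 := Nat.sInf_le h
    omega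
  obtain ⟨i₀, hi₀⟩ := h0
  set S : PGame := superstar x with hS
  -- the two components in explicit `mk` form
  rw [ordinalSum_eq S 1, ordinalSum_eq S (-1)]
  -- nim (x i₀) is the zero game up to relabelling
  have hnim0L : IsEmpty (nim ((x i₀ : ℕ) : Ordinal)).LeftMoves := by
    rw [hi₀, Nat.cast_zero]; infer_instance
  have hnim0R : IsEmpty (nim ((x i₀ : ℕ) : Ordinal)).RightMoves := by
    rw [hi₀, Nat.cast_zero]; infer_instance
  have rnim0 := misereWins_add_empty _ hnim0L hnim0R
  set M1 : PGame := PGame.mk (S.LeftMoves ⊕ (1 : PGame).LeftMoves)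
      (S.RightMoves ⊕ (1 : PGame).RightMoves)
      (Sum.elim S.moveLeft fun i => ordinalSum S ((1 : PGame).moveLeft i))
      (Sum.elim S.moveRight fun j => ordinalSum S ((1 : PGame).moveRight j)) with hM1
  set M2 : PGame := PGame.mk (S.LeftMoves ⊕ (-1 : PGame).LeftMoves)
      (S.RightMoves ⊕ (-1 : PGame).RightMoves)
      (Sum.elim S.moveLeft fun i => ordinalSum S ((-1 : PGame).moveLeft i))
      (Sum.elim S.moveRight fun j => ordinalSum S ((-1 : PGame).moveRight j)) with hM2
  -- Right moving first loses in M1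
  have hM1f : ¬ misereWins false M1 := by
    rw [misereWins]
    push_neg
    constructor
    · exact ⟨Sum.inl i₀⟩
    · rintro (j | j)
      · exact misereWins_nim (x j) (hx1 j) true
      · exact j.elim
  -- Left moving first loses in M2
  have hM2t : ¬ misereWins true M2 := by
    rw [misereWins]
    push_neg
    constructor
    · exact ⟨Sum.inl i₀⟩
    · rintro (i | i)
      · exact misereWins_nim (x i) (hx1 i) false
      · exact i.elim
  -- Left moving first wins the sum: move the M2 base to nim 0
  have hLwin : misereWins true (M1 + M2) := by
    rw [hM1, hM2, add_mk_eq, misereWins]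
    refine Or.inr ⟨Sum.inr (Sum.inl i₀), ?_⟩
    show ¬ misereWins false (M1 + nim ((x i₀ : ℕ) : Ordinal))
    exact fun h => hM1f (((rnim0 M1 false).1).mp h)
  -- Right moving first wins the sum: move the M1 base to nim 0
  have hRwin : misereWins false (M1 + M2) := by
    rw [hM1, hM2, add_mk_eq, misereWins]
    refine Or.inr ⟨Sum.inl (Sum.inl i₀), ?_⟩
    show ¬ misereWins true (nim ((x i₀ : ℕ) : Ordinal) + M2)
    exact fun h => hM2t (((rnim0 M2 true).2).mp h)
  rw [misereOutcome, outcomeOf]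
  simp [hLwin, hRwin]
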